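/- Let m ≥ 1 be an integer and let α > 0 be a real number with α > (m − 2)/2. Define u : ℝ^m → ℝ² by u(x) = (cos(‖x‖^{−α}), sin(‖x‖^{−α})), where ℝ² = EuclideanSpace ℝ (Fin 2) carries the Euclidean norm. Then the function x ↦ ‖iteratedFDeriv ℝ 2 u x‖ is not Lebesgue-integrable on the open unit ball B(0,1) ⊆ ℝ^m. -/

import Mathlib

/-!
Writing `u = γ ∘ v` with `γ t = (cos t, sin t)`, the chain rule gives
`D²u(x)(h, h) = (Dv(x) h)² • γ''(v x) + D²v(x)(h, h) • γ'(v x)`, and since `γ'` and `γ'' = -γ`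
are orthonormal, `‖D²u(x)‖ ‖h‖² ≥ (Dv(x) h)²`. For `v = ‖·‖^{-α}`, Euler's identity for
homogeneous functions gives `Dv(x) x = -α ‖x‖^{-α}`, so `‖D²u(x)‖ ≥ α² ‖x‖^{-(2α+2)}`.
In polar coordinates `‖x‖^{-s}` is integrable near `0` only when `s < m`.
-/

open MeasureTheory

/-- The circle-valued lift `u(x) = (cos (v x), sin (v x)) ∈ ℝ²` of `v : E → ℝ`,
where `ℝ² = EuclideanSpace ℝ (Fin 2)`. -/
noncomputable def circleLift {E : Type*} (v : E → ℝ) (x : E) : EuclideanSpace ℝ (Fin 2) :=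
  (WithLp.equiv 2 (Fin 2 → ℝ)).symm ![Real.cos (v x), Real.sin (v x)]

open Real Filter Topology Metric Set

section Integrability

variable {E F : Type*} [NormedAddCommGroup E] [NormedSpace ℝ E] [FiniteDimensional ℝ E]
  [Nontrivial E] [MeasurableSpace E] [BorelSpace E] [NormedAddCommGroup F]
  (μ : Measure E) [μ.IsAddHaarMeasure]

theorem not_integrableOn_ball_norm_rpow_neg {s r : ℝ} (hs : Module.finrank ℝ E ≤ s)
    (hr : 0 < r) : ¬ IntegrableOn (fun x : E => ‖x‖ ^ (-s)) (ball 0 r) μ := by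
  rw [integrableOn_fun_norm_addHaar μ (f := fun y => y ^ (-s))]
  intro h
  have hpow : IntegrableOn (fun y : ℝ => y ^ ((Module.finrank ℝ E : ℝ) - 1 - s)) (Ioo 0 r) := by
    refine h.congr_fun (fun y hy => ?_) measurableSet_Ioo
    dsimp only
    rw [smul_eq_mul, ← rpow_natCast, ← rpow_add hy.1, Nat.cast_sub Module.finrank_pos,
      Nat.cast_one, sub_eq_add_neg _ s]
  rw [intervalIntegral.integrableOn_Ioo_rpow_iff hr] at hpow
  linarith

theorem not_integrableOn_ball_of_rpow_neg_le_norm {f : E → F} {c s r : ℝ} (hc : 0 < c)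
    (hs : Module.finrank ℝ E ≤ s) (hr : 0 < r)
    (hf : ∀ᵐ x ∂μ.restrict (ball 0 r), c * ‖x‖ ^ (-s) ≤ ‖f x‖) :
    ¬ IntegrableOn f (ball 0 r) μ := by
  intro h
  have hmeas : AEStronglyMeasurable (fun x : E => c * ‖x‖ ^ (-s)) (μ.restrict (ball 0 r)) :=
    (measurable_const.mul (measurable_norm.pow_const _)).aestronglyMeasurable
  have hint : IntegrableOn (fun x : E => c * ‖x‖ ^ (-s)) (ball 0 r) μ := by
    refine h.norm.mono' hmeas ?_
    filter_upwards [hf] with x hx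
    rwa [norm_of_nonneg (by positivity)]
  exact not_integrableOn_ball_norm_rpow_neg μ hs hr
    ((integrable_const_mul_iff (isUnit_iff_ne_zero.2 hc.ne') _).1 hint)

end Integrability

section Calculus

variable {E F : Type*} [NormedAddCommGroup E] [NormedSpace ℝ E] [NormedAddCommGroup F]
  [NormedSpace ℝ F]

theorem fderiv_fderiv_comp_apply {φ : ℝ → F} {v : E → ℝ} {x : E} (hφ : ContDiff ℝ 2 φ)
    (hv : ContDiffAt ℝ 2 v x) (h k : E) :
    fderiv ℝ (fderiv ℝ (φ ∘ v)) x h k =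
      (fderiv ℝ v x h * fderiv ℝ v x k) • deriv (deriv φ) (v x) +
        fderiv ℝ (fderiv ℝ v) x h k • deriv φ (v x) := by
  have hφ' : Differentiable ℝ φ := hφ.differentiable (by norm_num)
  have hφ'' : Differentiable ℝ (deriv φ) :=
    (contDiff_succ_iff_deriv (n := 1).1 hφ).2.2.differentiable (by norm_num)
  have hv' : DifferentiableAt ℝ (fderiv ℝ v) x :=
    (hv.fderiv_right (m := 1) (by norm_num)).differentiableAt (by norm_num)
  have hcomp' : DifferentiableAt ℝ (fderiv ℝ (φ ∘ v)) x :=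
    ((hφ.contDiffAt.comp x hv).fderiv_right (m := 1) (by norm_num)).differentiableAt
      (by norm_num)
  have hfirst : (fun y => fderiv ℝ (φ ∘ v) y k) =ᶠ[𝓝 x]
      fun y => fderiv ℝ v y k • deriv φ (v y) := by
    filter_upwards [hv.eventually (by simp)] with y hy
    rw [fderiv_comp y (hφ' _) (hy.differentiableAt (by norm_num))]
    simp [fderiv_eq_smul_deriv]
  have hprod : HasFDerivAt (fun y => fderiv ℝ v y k • deriv φ (v y)) _ x :=
    (hv'.hasFDerivAt.clm_apply (hasFDerivAt_const k x)).fun_smul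
      ((hφ'' (v x)).hasFDerivAt.comp x (hv.differentiableAt (by norm_num)).hasFDerivAt)
  have happly : fderiv ℝ (fderiv ℝ (φ ∘ v)) x h k =
      fderiv ℝ (fun y => fderiv ℝ (φ ∘ v) y k) x h := by
    simp [fderiv_clm_apply hcomp' (differentiableAt_const k)]
  rw [happly, hfirst.fderiv_eq, hprod.fderiv]
  simp [fderiv_eq_smul_deriv, smul_smul, mul_comm]

theorem fderiv_apply_self_of_homogeneous {v : E → F} {p : ℝ} {x : E}
    (hhom : ∀ c : ℝ, 0 < c → ∀ y, v (c • y) = c ^ p • v y) (hv : DifferentiableAt ℝ v x) :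
    fderiv ℝ v x x = p • v x := by
  have hray : HasDerivAt (fun c : ℝ => v (c • x)) (fderiv ℝ v x x) 1 := by
    simpa [Function.comp_def] using hv.hasFDerivAt.comp_hasDerivAt_of_eq 1
      ((hasDerivAt_id 1).smul_const x) (one_smul ℝ x).symm
  have hpow : HasDerivAt (fun c : ℝ => c ^ p • v x) (p • v x) 1 := by
    simpa using (hasDerivAt_rpow_const (p := p) (Or.inl one_ne_zero)).smul_const (v x)
  refine hray.unique (hpow.congr_of_eventuallyEq ?_)
  filter_upwards [lt_mem_nhds one_pos] with c hc using hhom c hc x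

end Calculus

section CircleLift

theorem hasDerivAt_circleLift_id (t : ℝ) :
    HasDerivAt (circleLift id) (circleLift id (t + π / 2)) t := by
  have h : HasDerivAt (fun s : ℝ => ![cos s, sin s]) ![cos (t + π / 2), sin (t + π / 2)] t := by
    refine hasDerivAt_pi.2 fun i => ?_
    fin_cases i
    · simpa [cos_add_pi_div_two] using hasDerivAt_cos t
    · simpa [sin_add_pi_div_two] using hasDerivAt_sin t
  exact (PiLp.continuousLinearEquiv 2 ℝ (fun _ : Fin 2 => ℝ)).symm.hasFDerivAt.comp_hasDerivAt t h

theorem contDiff_circleLift_id {n : WithTop ℕ∞} : ContDiff ℝ n (circleLift id) :=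
  contDiff_piLp' 2 fun i => by fin_cases i <;> simpa [circleLift] using by fun_prop

theorem deriv_circleLift_id : deriv (circleLift id) = fun t => circleLift id (t + π / 2) :=
  funext fun t => (hasDerivAt_circleLift_id t).deriv

theorem deriv_deriv_circleLift_id (t : ℝ) :
    deriv (deriv (circleLift id)) t = -circleLift id t := by
  rw [deriv_circleLift_id, deriv_comp_add_const, deriv_circleLift_id]
  ext i
  fin_cases i <;> simp [circleLift, add_assoc]

theorem norm_smul_deriv_deriv_circleLift_id_add (a b t : ℝ) :
    ‖a • deriv (deriv (circleLift id)) t + b • deriv (circleLift id) t‖ = √(a ^ 2 + b ^ 2) := by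
  rw [deriv_deriv_circleLift_id, deriv_circleLift_id, EuclideanSpace.norm_eq]
  congr 1
  simp [circleLift, Fin.sum_univ_two, cos_add_pi_div_two, sin_add_pi_div_two]
  linear_combination (a ^ 2 + b ^ 2) * sin_sq_add_cos_sq t

variable {E : Type*} [NormedAddCommGroup E] [NormedSpace ℝ E]

theorem sq_fderiv_le_norm_iteratedFDeriv_circleLift {v : E → ℝ} {x : E}
    (hv : ContDiffAt ℝ 2 v x) (h : E) :
    fderiv ℝ v x h ^ 2 ≤ ‖iteratedFDeriv ℝ 2 (circleLift v) x‖ * ‖h‖ ^ 2 := by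
  have hsecond : iteratedFDeriv ℝ 2 (circleLift v) x ![h, h] =
      (fderiv ℝ v x h * fderiv ℝ v x h) • deriv (deriv (circleLift id)) (v x) +
        fderiv ℝ (fderiv ℝ v) x h h • deriv (circleLift id) (v x) := by
    rw [iteratedFDeriv_two_apply]
    -- `circleLift v` is definitionally `circleLift id ∘ v`
    exact fderiv_fderiv_comp_apply contDiff_circleLift_id hv h h
  calc fderiv ℝ v x h ^ 2
      ≤ √((fderiv ℝ v x h * fderiv ℝ v x h) ^ 2 + fderiv ℝ (fderiv ℝ v) x h h ^ 2) :=
        le_sqrt_of_sq_le (by nlinarith [sq_nonneg (fderiv ℝ (fderiv ℝ v) x h h)])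
    _ = ‖iteratedFDeriv ℝ 2 (circleLift v) x ![h, h]‖ := by
        rw [hsecond, norm_smul_deriv_deriv_circleLift_id_add]
    _ ≤ ‖iteratedFDeriv ℝ 2 (circleLift v) x‖ * ∏ i, ‖![h, h] i‖ :=
        (iteratedFDeriv ℝ 2 (circleLift v) x).le_opNorm _
    _ = ‖iteratedFDeriv ℝ 2 (circleLift v) x‖ * ‖h‖ ^ 2 := by simp [Fin.prod_univ_two, sq]

end CircleLift

section NormRpow

variable {E : Type*} [NormedAddCommGroup E] [InnerProductSpace ℝ E]

theorem fderiv_norm_rpow_apply_self {x : E} (hx : x ≠ 0) (p : ℝ) :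
    fderiv ℝ (fun y : E => ‖y‖ ^ p) x x = p * ‖x‖ ^ p :=
  fderiv_apply_self_of_homogeneous
    (fun c hc y => by rw [norm_smul, norm_of_nonneg hc.le, mul_rpow hc.le (norm_nonneg y),
      smul_eq_mul])
    ((differentiableAt_id.norm ℝ hx).rpow_const (Or.inl (norm_ne_zero_iff.2 hx)))

theorem rpow_le_norm_iteratedFDeriv_circleLift_norm_rpow (α : ℝ) {x : E} (hx : x ≠ 0) :
    α ^ 2 * ‖x‖ ^ (-(2 * α + 2)) ≤
      ‖iteratedFDeriv ℝ 2 (circleLift fun y : E => ‖y‖ ^ (-α)) x‖ := by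
  have hx' : 0 < ‖x‖ := norm_pos_iff.2 hx
  have hv : ContDiffAt ℝ 2 (fun y : E => ‖y‖ ^ (-α)) x :=
    (contDiffAt_norm ℝ hx).rpow_const_of_ne hx'.ne'
  have hbound := sq_fderiv_le_norm_iteratedFDeriv_circleLift hv x
  rw [fderiv_norm_rpow_apply_self hx] at hbound
  have hscale : α ^ 2 * ‖x‖ ^ (-(2 * α + 2)) * ‖x‖ ^ 2 = (-α * ‖x‖ ^ (-α)) ^ 2 := by
    rw [mul_pow, ← rpow_natCast ‖x‖, ← rpow_natCast (‖x‖ ^ (-α)), ← rpow_mul hx'.le, mul_assoc,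
      ← rpow_add hx']
    ring_nf
  exact le_of_mul_le_mul_right (hscale ▸ hbound) (by positivity)

end NormRpow

/-- For `u(x) = (cos(‖x‖^{-α}), sin(‖x‖^{-α}))` on `ℝᵐ` with `α > (m-2)/2`, the norm of
the second iterated Fréchet derivative of `u` is not Lebesgue-integrable on the
unit ball. -/
theorem circleLift_rpow_not_integrable_second (m : ℕ) (hm : 1 ≤ m) (α : ℝ) (hα : 0 < α)
    (hα' : (m - 2 : ℝ) / 2 < α) :
    ¬ IntegrableOn
        (fun x : EuclideanSpace ℝ (Fin m) =>
          ‖iteratedFDeriv ℝ 2 (circleLift fun y : EuclideanSpace ℝ (Fin m) => ‖y‖ ^ (-α)) x‖)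
        (Metric.ball 0 1) volume := by
  have : Nonempty (Fin m) := ⟨⟨0, hm⟩⟩
  refine not_integrableOn_ball_of_rpow_neg_le_norm volume (s := 2 * α + 2) (pow_pos hα 2) ?_
    one_pos ?_
  · rw [finrank_euclideanSpace_fin]
    linarith
  · filter_upwards [ae_restrict_of_ae (compl_mem_ae_iff.2 (measure_singleton 0))] with x hx
    rw [norm_norm]
    exact rpow_le_norm_iteratedFDeriv_circleLift_norm_rpow α hx
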